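/- Let U be a strongly self-centralizing subalgebra of a finite-dimensional Lie algebra L, i.e., C_L(x) = U for every nonzero x ∈ U. Then nil_L(x) = U for every nonzero x ∈ U, and consequently the nilpotent graph Γ_N(L) is disconnected (no vertex of U \ {0} is adjacent to any vertex outside U). -/

import Mathlib

/-- The nilpotentizer of a Lie algebra `L`: the set of elements `x` such that the Lie
subalgebra generated by `x` and `y` is nilpotent for every `y ∈ L`. -/
def nilSet (F : Type*) [Field F] (L : Type*) [LieRing L] [LieAlgebra F L] : Set L :=
  {x : L | ∀ y : L, LieRing.IsNilpotent (LieSubalgebra.lieSpan F L {x, y})}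

/-- The nilpotentizer of an element `h` of a Lie algebra `L`: the set of `x ∈ L` such
that the Lie subalgebra generated by `h` and `x` is nilpotent. -/
def nilIn (F : Type*) [Field F] (L : Type*) [LieRing L] [LieAlgebra F L] (h : L) : Set L :=
  {x : L | LieRing.IsNilpotent (LieSubalgebra.lieSpan F L {h, x})}

/-- The nilpotent graph of a Lie algebra `L`: vertices are the elements of
`L` not in `nilSet F L`, and two distinct vertices are adjacent iff the Lie
subalgebra they generate is nilpotent. -/
def nilGraph (F : Type*) [Field F] (L : Type*) [LieRing L] [LieAlgebra F L] :
    SimpleGraph {x : L // x ∉ nilSet F L} where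
  Adj x y := x ≠ y ∧
    LieRing.IsNilpotent (LieSubalgebra.lieSpan F L {(x : L), (y : L)})
  symm := ⟨by
    rintro x y ⟨h1, h2⟩
    exact ⟨h1.symm, by rwa [Set.pair_comm]⟩⟩
  loopless := ⟨by rintro x ⟨h1, -⟩; exact h1 rfl⟩

/-!
If `⟨x, y⟩` is nilpotent with `0 ≠ x ∈ U`, a nonzero central element `z` of `⟨x, y⟩` lies in
`C_L(x) = U`, and then `y ∈ C_L(z) = U`; conversely `U` is abelian, so `U ⊆ nil_L(x)`. Hence every
neighbour of a vertex in `U` lies in `U`, and no path joins `U \ {0}` to the vertices outside `U`.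
-/

namespace LieSubalgebra

variable {R L : Type*} [CommRing R] [LieRing L] [LieAlgebra R L]

theorem exists_ne_zero_forall_lie_eq_zero_of_isNilpotent (N : LieSubalgebra R L)
    [LieRing.IsNilpotent N] [Nontrivial N] : ∃ z ∈ N, z ≠ 0 ∧ ∀ a ∈ N, ⁅a, z⁆ = 0 := by
  have := LieAlgebra.non_trivial_center_of_isNilpotent (R := R) (L := N)
  obtain ⟨z, hz⟩ := exists_ne (0 : LieAlgebra.center R N)
  refine ⟨z.1.1, z.1.2, fun h ↦ hz (Subtype.ext (Subtype.ext h)), fun a ha ↦ ?_⟩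
  simpa using congrArg Subtype.val ((LieModule.mem_maxTrivSubmodule R N N z).mp z.2 ⟨a, ha⟩)

def IsStronglySelfCentralizing (U : LieSubalgebra R L) : Prop :=
  ∀ x ∈ U, x ≠ 0 → {y : L | ⁅x, y⁆ = 0} = (U : Set L)

namespace IsStronglySelfCentralizing

variable {U : LieSubalgebra R L} (hU : U.IsStronglySelfCentralizing)
include hU

theorem lie_eq_zero_iff {x y : L} (hx : x ∈ U) (hx0 : x ≠ 0) : ⁅x, y⁆ = 0 ↔ y ∈ U :=
  Set.ext_iff.mp (hU x hx hx0) y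

theorem lie_eq_zero {x y : L} (hx : x ∈ U) (hy : y ∈ U) : ⁅x, y⁆ = 0 := by
  rcases eq_or_ne x 0 with rfl | hx0
  · exact zero_lie y
  · exact (hU.lie_eq_zero_iff hx hx0).mpr hy

end IsStronglySelfCentralizing

end LieSubalgebra

section Nilpotentizer

open LieSubalgebra

variable {F L : Type*} [Field F] [LieRing L] [LieAlgebra F L]

theorem mem_nilIn_comm {x y : L} : x ∈ nilIn F L y ↔ y ∈ nilIn F L x := by
  show LieRing.IsNilpotent (lieSpan F L {y, x}) ↔ LieRing.IsNilpotent (lieSpan F L {x, y})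
  rw [Set.pair_comm]

theorem zero_mem_nilSet : (0 : L) ∈ nilSet F L := fun y ↦ by
  have : IsLieAbelian (lieSpan F L {0, y}) := isLieAbelian_lieSpan_iff.mpr (by simp)
  infer_instance

namespace LieSubalgebra.IsStronglySelfCentralizing

variable {U : LieSubalgebra F L} (hU : U.IsStronglySelfCentralizing)
include hU

theorem nilIn_subset {x : L} (hx : x ∈ U) (hx0 : x ≠ 0) : nilIn F L x ⊆ U := by
  intro y (hN : LieRing.IsNilpotent (lieSpan F L {x, y}))
  have hxN : x ∈ lieSpan F L {x, y} := subset_lieSpan (Set.mem_insert x _)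
  have hyN : y ∈ lieSpan F L {x, y} := subset_lieSpan (Set.mem_insert_of_mem x rfl)
  have : Nontrivial (lieSpan F L {x, y}) :=
    nontrivial_of_ne ⟨x, hxN⟩ 0 (by simpa [Subtype.ext_iff] using hx0)
  obtain ⟨z, -, hz0, hz⟩ := exists_ne_zero_forall_lie_eq_zero_of_isNilpotent (lieSpan F L {x, y})
  have hzU : z ∈ U := (hU.lie_eq_zero_iff hx hx0).mp (hz x hxN)
  exact (hU.lie_eq_zero_iff hzU hz0).mp (by rw [← lie_skew, hz y hyN, neg_zero])

theorem subset_nilIn {x : L} (hx : x ∈ U) : (U : Set L) ⊆ nilIn F L x := fun y hy ↦ by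
  have : IsLieAbelian (lieSpan F L {x, y}) := isLieAbelian_lieSpan_iff.mpr <| by
    rintro a (rfl | rfl) b (rfl | rfl) <;> exact hU.lie_eq_zero ‹_› ‹_›
  exact (inferInstance : LieRing.IsNilpotent (lieSpan F L {x, y}))

theorem nilIn_eq {x : L} (hx : x ∈ U) (hx0 : x ≠ 0) : nilIn F L x = U :=
  (hU.nilIn_subset hx hx0).antisymm (hU.subset_nilIn hx)

theorem mem_of_nilGraph_adj {v w : {x : L // x ∉ nilSet F L}} (hvw : (nilGraph F L).Adj v w)
    (hv : (v : L) ∈ U) : (w : L) ∈ U :=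
  hU.nilIn_subset hv (fun h ↦ v.2 (h ▸ zero_mem_nilSet)) hvw.2

end LieSubalgebra.IsStronglySelfCentralizing

end Nilpotentizer

theorem SimpleGraph.Reachable.mem_of_adj_mem {V : Type*} {G : SimpleGraph V} {S : Set V}
    (hS : ∀ v w, G.Adj v w → v ∈ S → w ∈ S) {u v : V} (huv : G.Reachable u v) (hu : u ∈ S) :
    v ∈ S := by
  rw [SimpleGraph.reachable_iff_reflTransGen] at huv
  induction huv with
  | refl => exact hu
  | tail _ hadj ih => exact hS _ _ hadj ih

theorem strongly_self_centralizing_disconnected_general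
    (F : Type*) [Field F] (L : Type*) [LieRing L] [LieAlgebra F L]
    (U : LieSubalgebra F L) (hUbot : U ≠ ⊥) (hUtop : U ≠ ⊤)
    (hU : ∀ x ∈ U, x ≠ 0 → {y : L | ⁅x, y⁆ = 0} = (U : Set L)) :
    (∀ x ∈ U, x ≠ 0 → nilIn F L x = (U : Set L)) ∧
    (∀ (x : L) (hx : x ∈ U) (hx0 : x ≠ 0) (hx' : x ∉ nilSet F L)
        (y : L) (hy : y ∉ U) (hy' : y ∉ nilSet F L),
      ¬ (nilGraph F L).Adj ⟨x, hx'⟩ ⟨y, hy'⟩) ∧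
    ¬ (nilGraph F L).Connected := by
  have hU : U.IsStronglySelfCentralizing := hU
  refine ⟨fun x hx hx0 ↦ hU.nilIn_eq hx hx0,
    fun x hx _ _ y hy _ hadj ↦ hy (hU.mem_of_nilGraph_adj hadj hx), fun hconn ↦ ?_⟩
  obtain ⟨x, hx, hx0⟩ := U.toSubmodule.exists_mem_ne_zero_of_ne_bot (by simpa using hUbot)
  obtain ⟨y, hy⟩ : ∃ y, y ∉ U := by simpa [SetLike.ext_iff] using hUtop
  have hxy : y ∉ nilIn F L x := by rwa [hU.nilIn_eq hx hx0]
  have hx' : x ∉ nilSet F L := fun h ↦ hxy (h y)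
  have hy' : y ∉ nilSet F L := fun h ↦ hxy (mem_nilIn_comm.mp (h x))
  exact hy ((hconn ⟨x, hx'⟩ ⟨y, hy'⟩).mem_of_adj_mem (S := Subtype.val ⁻¹' (U : Set L))
    (fun _ _ ↦ hU.mem_of_nilGraph_adj) hx)

theorem strongly_self_centralizing_disconnected
    (F : Type*) [Field F] (L : Type*) [LieRing L] [LieAlgebra F L]
    [Module.Finite F L] (hL : ¬ LieRing.IsNilpotent L)
    (U : LieSubalgebra F L) (hUbot : U ≠ ⊥) (hUtop : U ≠ ⊤)
    (hU : ∀ x ∈ U, x ≠ 0 → {y : L | ⁅x, y⁆ = 0} = (U : Set L)) :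
    (∀ x ∈ U, x ≠ 0 → nilIn F L x = (U : Set L)) ∧
    (∀ (x : L) (hx : x ∈ U) (hx0 : x ≠ 0) (hx' : x ∉ nilSet F L)
        (y : L) (hy : y ∉ U) (hy' : y ∉ nilSet F L),
      ¬ (nilGraph F L).Adj ⟨x, hx'⟩ ⟨y, hy'⟩) ∧
    ¬ (nilGraph F L).Connected :=
  strongly_self_centralizing_disconnected_general F L U hUbot hUtop hU
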